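/- With the notation of the context, assume φ_a = 0 for all a, and additionally give real numbers R_{ab} (a,b ∈ {m̄+1,…,n}), κ_{b0}, κ_{bα}, ψᴬ_b, h_0, h_α. Define covectors χ_b, θ ∈ E* by: χ_b(Y_0) = κ_{b0}, χ_b(Y_α) = κ_{bα}, χ_b(P⁰) = 0, χ_b(Pᴬ) = ψᴬ_b, χ_b(Pᵃ) = δ_{ab}, χ_b(V_a) = −R_{ab}; and θ(Y_0) = h_0, θ(Y_α) = h_α, θ(P⁰) = 1, θ(Pᴬ) = βᴬ, θ(Pᵃ) = βᵃ, θ(V_a) = 0. Let T = (∩_b ker χ_b) ∩ ker θ. Then the restricted pair satisfies ker(Ω|_T) ∩ ker(η|_T) = {0} if and only if det(R_{ab}) ≠ 0. -/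

import Mathlib

/-!
The tangent space `T = (⋂_b ker χ_b) ∩ ker θ` is a graph over the coordinates `(y₀, y, p_A, v)`:
each `χ_b` contains `p_b` with coefficient one and `θ` contains `p₀` with coefficient one, so any
vector can be pushed into `T` by correcting `p_b` and `p₀`. Pairing a vector `u ∈ ker η` with such
corrected test vectors reads off `u`: the test vectors along `V_a` give `R y_b = 0`, those along
`P^A` then give `y_A = 0`, those along `Y_α` give `p_α = 0`, and finally `χ_b(u) = 0` gives
`Rᵀ v = 0` and `θ(u) = 0` gives `p₀ = 0`. Conversely a nonzero `v` with `Rᵀ v = 0` spans a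
characteristic vector `v^a V_a`, since `Ω` does not see the `V_a` once `φ = 0`.
-/

/-- A vector of `E` in the basis `{Y₀, Y_α, P⁰, Pᵅ, V_a}`, with `α` ranging over `Fin mb ⊕ Fin k`
(the first summand is `A`, the second `a`). -/
structure EVec (mb k : ℕ) where
  y0 : ℝ
  y : Fin mb ⊕ Fin k → ℝ
  p0 : ℝ
  p : Fin mb ⊕ Fin k → ℝ
  v : Fin k → ℝ

noncomputable section

namespace EVec

variable {mb k : ℕ}

section Forms

variable (Γ : Fin mb ⊕ Fin k → ℝ) (s : (Fin mb ⊕ Fin k) → (Fin mb ⊕ Fin k) → ℝ)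
  (bb : Fin mb ⊕ Fin k → ℝ) (φ : Fin k → ℝ) (R : Fin k → Fin k → ℝ)
  (κ0 : Fin k → ℝ) (κ : Fin k → (Fin mb ⊕ Fin k) → ℝ) (ψ : Fin mb → Fin k → ℝ)
  (h0 : ℝ) (hv : Fin mb ⊕ Fin k → ℝ)

def omega (u w : EVec mb k) : ℝ :=
  (∑ α, (u.y α * w.p α - w.y α * u.p α))
    + (∑ α, Γ α * (u.y α * w.y0 - w.y α * u.y0))
    + (∑ A, bb (Sum.inl A) * (u.p (Sum.inl A) * w.y0 - w.p (Sum.inl A) * u.y0))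
    + (∑ a, bb (Sum.inr a) * (u.p (Sum.inr a) * w.y0 - w.p (Sum.inr a) * u.y0))
    + (1 / 2) * (∑ α, ∑ β, s α β * (u.y α * w.y β - w.y α * u.y β))
    + (∑ a, φ a * (u.v a * w.y0 - w.v a * u.y0))

def chi (b : Fin k) (u : EVec mb k) : ℝ :=
  κ0 b * u.y0 + (∑ α, κ b α * u.y α) + (∑ A, ψ A b * u.p (Sum.inl A)) + u.p (Sum.inr b)
    - ∑ a, R a b * u.v a

def theta (u : EVec mb k) : ℝ :=
  h0 * u.y0 + (∑ α, hv α * u.y α) + u.p0 + ∑ α, bb α * u.p α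

theorem omega_eq_sum_y_mul_p {u w : EVec mb k} (hu : u.y0 = 0)
    (hw : w.y0 = 0) (hwy : w.y = 0) : omega Γ s bb φ u w = ∑ α, u.y α * w.p α := by
  simp [omega, hu, hw, hwy]

theorem omega_eq_neg_sum_y_mul_p {u w : EVec mb k} (hu : u.y0 = 0)
    (huy : u.y = 0) (hw : w.y0 = 0) : omega Γ s bb φ u w = -∑ α, w.y α * u.p α := by
  simp [omega, hu, huy, hw]

theorem omega_mk_v_eq_zero (v : Fin k → ℝ) (w : EVec mb k) :
    omega Γ s bb 0 ⟨0, 0, 0, 0, v⟩ w = 0 := by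
  simp [omega]

def toT (w : EVec mb k) : EVec mb k :=
  let w' : EVec mb k :=
    { w with p := Sum.elim (fun A => w.p (Sum.inl A)) fun b => w.p (Sum.inr b) - chi R κ0 κ ψ b w }
  { w' with p0 := w'.p0 - theta bb h0 hv w' }

@[simp] theorem toT_y0 (w : EVec mb k) : (toT bb R κ0 κ ψ h0 hv w).y0 = w.y0 := rfl

@[simp] theorem toT_y (w : EVec mb k) : (toT bb R κ0 κ ψ h0 hv w).y = w.y := rfl

@[simp] theorem toT_v (w : EVec mb k) : (toT bb R κ0 κ ψ h0 hv w).v = w.v := rfl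

@[simp] theorem toT_p_inl (w : EVec mb k) (A : Fin mb) :
    (toT bb R κ0 κ ψ h0 hv w).p (Sum.inl A) = w.p (Sum.inl A) := rfl

@[simp] theorem toT_p_inr (w : EVec mb k) (b : Fin k) :
    (toT bb R κ0 κ ψ h0 hv w).p (Sum.inr b) = w.p (Sum.inr b) - chi R κ0 κ ψ b w := rfl

theorem chi_toT (b : Fin k) (w : EVec mb k) : chi R κ0 κ ψ b (toT bb R κ0 κ ψ h0 hv w) = 0 := by
  simp only [chi, toT_y0, toT_y, toT_v, toT_p_inl, toT_p_inr]
  ring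

theorem theta_toT (w : EVec mb k) : theta bb h0 hv (toT bb R κ0 κ ψ h0 hv w) = 0 := by
  simp only [theta, toT]
  ring

variable {Γ s bb φ R κ0 κ ψ h0 hv} {u : EVec mb k}

theorem omega_toT_eq_zero
    (hΩu : ∀ w, (∀ b, chi R κ0 κ ψ b w = 0) → theta bb h0 hv w = 0 → omega Γ s bb φ u w = 0)
    (w : EVec mb k) : omega Γ s bb φ u (toT bb R κ0 κ ψ h0 hv w) = 0 :=
  hΩu _ (fun b => chi_toT bb R κ0 κ ψ h0 hv b w) (theta_toT bb R κ0 κ ψ h0 hv w)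

theorem y_inr_eq_zero (hR : (Matrix.of R).det ≠ 0) (hu : u.y0 = 0)
    (hΩu : ∀ w, (∀ b, chi R κ0 κ ψ b w = 0) → theta bb h0 hv w = 0 → omega Γ s bb φ u w = 0) :
    (fun b => u.y (Sum.inr b)) = 0 := by
  refine Matrix.eq_zero_of_mulVec_eq_zero hR (funext fun a => ?_)
  have h := omega_toT_eq_zero hΩu ⟨0, 0, 0, 0, Pi.single a 1⟩
  rw [omega_eq_sum_y_mul_p Γ s bb φ hu rfl rfl, Fintype.sum_sum_type] at h
  simpa [chi, Matrix.mulVec, dotProduct, Pi.single_apply, mul_comm] using h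

theorem y_eq_zero (hR : (Matrix.of R).det ≠ 0) (hu : u.y0 = 0)
    (hΩu : ∀ w, (∀ b, chi R κ0 κ ψ b w = 0) → theta bb h0 hv w = 0 → omega Γ s bb φ u w = 0) :
    u.y = 0 := by
  have hinr := congrFun (y_inr_eq_zero hR hu hΩu)
  funext α
  rcases α with A | b
  · have h := omega_toT_eq_zero hΩu ⟨0, 0, 0, Sum.elim (Pi.single A 1) 0, 0⟩
    rw [omega_eq_sum_y_mul_p Γ s bb φ hu rfl rfl, Fintype.sum_sum_type] at h
    simpa [hinr, Pi.single_apply] using h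
  · exact hinr b

theorem p_eq_zero (hu : u.y0 = 0) (huy : u.y = 0)
    (hΩu : ∀ w, (∀ b, chi R κ0 κ ψ b w = 0) → theta bb h0 hv w = 0 → omega Γ s bb φ u w = 0) :
    u.p = 0 := by
  funext α
  have h := omega_toT_eq_zero hΩu ⟨0, Pi.single α 1, 0, 0, 0⟩
  rw [omega_eq_neg_sum_y_mul_p Γ s bb φ hu huy rfl] at h
  simpa [Pi.single_apply] using h

theorem eq_zero_of_omega_orthogonal (hR : (Matrix.of R).det ≠ 0) (hχu : ∀ b, chi R κ0 κ ψ b u = 0)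
    (hθu : theta bb h0 hv u = 0)
    (hΩu : ∀ w, (∀ b, chi R κ0 κ ψ b w = 0) → theta bb h0 hv w = 0 → omega Γ s bb φ u w = 0)
    (hu : u.y0 = 0) : u = ⟨0, 0, 0, 0, 0⟩ := by
  have hy := y_eq_zero hR hu hΩu
  have hp := p_eq_zero hu hy hΩu
  have huv : u.v = 0 := by
    refine Matrix.eq_zero_of_vecMul_eq_zero hR (funext fun b => ?_)
    simpa [chi, hu, hy, hp, Matrix.vecMul, dotProduct, mul_comm] using hχu b
  have hup0 : u.p0 = 0 := by simpa [theta, hu, hy, hp] using hθu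
  cases u
  simp_all

theorem exists_omega_orthogonal_ne_zero (hR : (Matrix.of R).det = 0) :
    ∃ u : EVec mb k, u ≠ ⟨0, 0, 0, 0, 0⟩ ∧ (∀ b, chi R κ0 κ ψ b u = 0) ∧ theta bb h0 hv u = 0 ∧
      (∀ w, omega Γ s bb 0 u w = 0) ∧ u.y0 = 0 := by
  obtain ⟨v, hv_ne, hvR⟩ := Matrix.exists_vecMul_eq_zero_iff.mpr hR
  refine ⟨⟨0, 0, 0, 0, v⟩, fun h => hv_ne (EVec.mk.inj h).2.2.2.2, fun b => ?_, by simp [theta],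
    omega_mk_v_eq_zero Γ s bb v, rfl⟩
  simpa [chi, Matrix.vecMul, dotProduct, mul_comm] using congrFun hvR b

end Forms

end EVec

end

theorem stmt_9_general (mb k : ℕ)
    (Γ : Fin mb ⊕ Fin k → ℝ)
    (s : (Fin mb ⊕ Fin k) → (Fin mb ⊕ Fin k) → ℝ)
    (bb : Fin mb ⊕ Fin k → ℝ) (φ : Fin k → ℝ)
    (hφ : ∀ a, φ a = 0)
    (R : Fin k → Fin k → ℝ)
    (κ0 : Fin k → ℝ) (κ : Fin k → (Fin mb ⊕ Fin k) → ℝ)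
    (ψ : Fin mb → Fin k → ℝ)
    (h0 : ℝ) (hv : Fin mb ⊕ Fin k → ℝ)
    (Ω : EVec mb k → EVec mb k → ℝ)
    (hΩ : ∀ u v, Ω u v =
      (∑ α, (u.y α * v.p α - v.y α * u.p α))
      + (∑ α, Γ α * (u.y α * v.y0 - v.y α * u.y0))
      + (∑ A, bb (Sum.inl A) * (u.p (Sum.inl A) * v.y0 - v.p (Sum.inl A) * u.y0))
      + (∑ a, bb (Sum.inr a) * (u.p (Sum.inr a) * v.y0 - v.p (Sum.inr a) * u.y0))
      + (1 / 2) * (∑ α, ∑ β, s α β * (u.y α * v.y β - v.y α * u.y β))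
      + (∑ a, φ a * (u.v a * v.y0 - v.v a * u.y0)))
    (η : EVec mb k → ℝ) (hη : ∀ u, η u = u.y0)
    (χ : Fin k → EVec mb k → ℝ)
    (hχ : ∀ b u, χ b u =
      κ0 b * u.y0 + (∑ α, κ b α * u.y α)
      + (∑ A, ψ A b * u.p (Sum.inl A)) + u.p (Sum.inr b)
      - ∑ a, R a b * u.v a)
    (θ : EVec mb k → ℝ)
    (hθ : ∀ u, θ u =
      h0 * u.y0 + (∑ α, hv α * u.y α) + u.p0 + ∑ α, bb α * u.p α) :
    (∀ u : EVec mb k, (∀ b, χ b u = 0) → θ u = 0 →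
        (∀ w : EVec mb k, (∀ b, χ b w = 0) → θ w = 0 → Ω u w = 0) →
        η u = 0 → u = ⟨0, 0, 0, 0, 0⟩)
    ↔ (Matrix.of R).det ≠ 0 := by
  obtain rfl : Ω = EVec.omega Γ s bb φ := funext fun u => funext (hΩ u)
  obtain rfl : φ = 0 := funext hφ
  obtain rfl : η = EVec.y0 := funext hη
  obtain rfl : χ = EVec.chi R κ0 κ ψ := funext fun b => funext (hχ b)
  obtain rfl : θ = EVec.theta bb h0 hv := funext hθ
  constructor
  · intro H hR
    obtain ⟨u, hne, hχu, hθu, hΩu, hu⟩ := EVec.exists_omega_orthogonal_ne_zero hR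
    exact hne (H u hχu hθu (fun w _ _ => hΩu w) hu)
  · intro hR u hχu hθu hΩu hu
    exact EVec.eq_zero_of_omega_orthogonal hR hχu hθu hΩu hu

/-- Assume `φ_a = 0`.  With the covectors `χ_b` (differentials of the
constraints cutting out `W₁`) and `θ` (differential of the Pontryagin Hamiltonian)
given componentwise as in the statement, and `T = (∩_b ker χ_b) ∩ ker θ`, the
restricted pair satisfies `ker(Ω|_T) ∩ ker(η|_T) = {0}` iff `det(R_{ab}) ≠ 0`. -/
theorem stmt_9 (mb k : ℕ) (hn : 1 ≤ mb + k)
    (Γ : Fin mb ⊕ Fin k → ℝ)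
    (s : (Fin mb ⊕ Fin k) → (Fin mb ⊕ Fin k) → ℝ)
    (hs : ∀ α β, s α β = - s β α)
    (bb : Fin mb ⊕ Fin k → ℝ) (φ : Fin k → ℝ)
    (hφ : ∀ a, φ a = 0)
    (R : Fin k → Fin k → ℝ)
    (κ0 : Fin k → ℝ) (κ : Fin k → (Fin mb ⊕ Fin k) → ℝ)
    (ψ : Fin mb → Fin k → ℝ)
    (h0 : ℝ) (hv : Fin mb ⊕ Fin k → ℝ)
    (Ω : EVec mb k → EVec mb k → ℝ)
    (hΩ : ∀ u v, Ω u v =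
      (∑ α, (u.y α * v.p α - v.y α * u.p α))
      + (∑ α, Γ α * (u.y α * v.y0 - v.y α * u.y0))
      + (∑ A, bb (Sum.inl A) * (u.p (Sum.inl A) * v.y0 - v.p (Sum.inl A) * u.y0))
      + (∑ a, bb (Sum.inr a) * (u.p (Sum.inr a) * v.y0 - v.p (Sum.inr a) * u.y0))
      + (1 / 2) * (∑ α, ∑ β, s α β * (u.y α * v.y β - v.y α * u.y β))
      + (∑ a, φ a * (u.v a * v.y0 - v.v a * u.y0)))
    (η : EVec mb k → ℝ) (hη : ∀ u, η u = u.y0)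
    (χ : Fin k → EVec mb k → ℝ)
    (hχ : ∀ b u, χ b u =
      κ0 b * u.y0 + (∑ α, κ b α * u.y α)
      + (∑ A, ψ A b * u.p (Sum.inl A)) + u.p (Sum.inr b)
      - ∑ a, R a b * u.v a)
    (θ : EVec mb k → ℝ)
    (hθ : ∀ u, θ u =
      h0 * u.y0 + (∑ α, hv α * u.y α) + u.p0 + ∑ α, bb α * u.p α) :
    (∀ u : EVec mb k, (∀ b, χ b u = 0) → θ u = 0 →
        (∀ w : EVec mb k, (∀ b, χ b w = 0) → θ w = 0 → Ω u w = 0) →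
        η u = 0 → u = ⟨0, 0, 0, 0, 0⟩)
    ↔ (Matrix.of R).det ≠ 0 :=
  stmt_9_general mb k Γ s bb φ hφ R κ0 κ ψ h0 hv Ω hΩ η hη χ hχ θ hθ
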